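/- Let K be a Metropolis–Hastings kernel with a Lyapunov function V satisfying (KV)(x) ≤ (1−α)V(x)+β, and let K̂ be a modified Metropolis–Hastings kernel with the same proposal such that for every x and proposed x', the acceptance probability of K̂ is ≥ that of K when V(x') < V(x) and ≤ that of K when V(x') ≥ V(x). Then (K̂V)(x) ≤ (KV)(x) ≤ (1−α)V(x)+β for all x; i.e., K̂ inherits the Lyapunov inequality. -/

import Mathlib

/-!
Writing `(KV)(x) = V x + ∫ a x y (V y - V x) dQ_x(y)`, the modified kernel raises the acceptance
probability exactly where the integrand `V y - V x` is negative and lowers it where it is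
nonnegative, so pointwise the modified integrand is smaller and `(K̂V)(x) ≤ (KV)(x)`; the drift
bound for `K` then passes to `K̂`.
-/

open MeasureTheory Set

/-- `(KV)(x)` for the Metropolis–Hastings kernel with proposal `Q` and acceptance probability `a`. -/
noncomputable def mhDrift {X : Type*} [MeasurableSpace X] (Q : X → Measure X)
    (a : X → X → ℝ) (V : X → ℝ) (x : X) : ℝ :=
  ∫ y, (a x y * V y + (1 - a x y) * V x) ∂(Q x)

lemma mul_add_one_sub_mul_le_of_sign {p q t c : ℝ}
    (hlt : t < c → p ≤ q) (hge : c ≤ t → q ≤ p) :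
    q * t + (1 - q) * c ≤ p * t + (1 - p) * c := by
  rcases lt_or_ge t c with h | h
  · nlinarith [hlt h]
  · nlinarith [hge h]

lemma integrable_mul_add_one_sub_mul {X : Type*} [MeasurableSpace X] {μ : Measure X}
    [IsFiniteMeasure μ] {b f : X → ℝ} (c : ℝ) (hb : Measurable b) (hb01 : ∀ y, b y ∈ Icc 0 1)
    (hf : Integrable f μ) : Integrable (fun y => b y * f y + (1 - b y) * c) μ := by
  have hbdd : Integrable (fun y => b y * (f y - c)) μ :=
    (hf.sub (integrable_const c)).bdd_mul hb.aestronglyMeasurable (c := 1)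
      (Filter.Eventually.of_forall fun y => by
        rw [Real.norm_eq_abs, abs_le]
        exact ⟨by linarith [(hb01 y).1], (hb01 y).2⟩)
  refine (hbdd.add (integrable_const c)).congr (Filter.Eventually.of_forall fun y => ?_)
  simp only [Pi.add_apply]
  ring

lemma mhDrift_le_mhDrift {X : Type*} [MeasurableSpace X] {Q : X → Measure X}
    [∀ x, IsFiniteMeasure (Q x)] {V : X → ℝ} {a ahat : X → X → ℝ}
    (hameas : ∀ x, Measurable (a x)) (hahatmeas : ∀ x, Measurable (ahat x))
    (ha01 : ∀ x y, a x y ∈ Icc 0 1) (hahat01 : ∀ x y, ahat x y ∈ Icc 0 1)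
    (hVint : ∀ x, Integrable V (Q x))
    (hdec : ∀ x y, V y < V x → a x y ≤ ahat x y)
    (hinc : ∀ x y, V x ≤ V y → ahat x y ≤ a x y) (x : X) :
    mhDrift Q ahat V x ≤ mhDrift Q a V x :=
  integral_mono
    (integrable_mul_add_one_sub_mul _ (hahatmeas x) (hahat01 x) (hVint x))
    (integrable_mul_add_one_sub_mul _ (hameas x) (ha01 x) (hVint x))
    fun y => mul_add_one_sub_mul_le_of_sign (hdec x y) (hinc x y)

theorem stmt_12_general {X : Type*} [MeasurableSpace X]
    (Q : X → Measure X) (hQ : ∀ x, IsProbabilityMeasure (Q x))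
    (V : X → ℝ)
    (a ahat : X → X → ℝ)
    (hameas : ∀ x, Measurable (a x)) (hahatmeas : ∀ x, Measurable (ahat x))
    (ha01 : ∀ x y, a x y ∈ Set.Icc (0 : ℝ) 1)
    (hahat01 : ∀ x y, ahat x y ∈ Set.Icc (0 : ℝ) 1)
    (hVint : ∀ x, Integrable V (Q x))
    (hdec : ∀ x y, V y < V x → a x y ≤ ahat x y)
    (hinc : ∀ x y, V x ≤ V y → ahat x y ≤ a x y)
    (α β : ℝ)
    (hdrift : ∀ x,
      ∫ y, (a x y * V y + (1 - a x y) * V x) ∂(Q x) ≤ (1 - α) * V x + β) :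
    ∀ x,
      (∫ y, (ahat x y * V y + (1 - ahat x y) * V x) ∂(Q x)
          ≤ ∫ y, (a x y * V y + (1 - a x y) * V x) ∂(Q x)) ∧
      (∫ y, (ahat x y * V y + (1 - ahat x y) * V x) ∂(Q x) ≤ (1 - α) * V x + β) := by
  intro x
  have : ∀ x, IsProbabilityMeasure (Q x) := hQ
  have hle : mhDrift Q ahat V x ≤ mhDrift Q a V x :=
    mhDrift_le_mhDrift hameas hahatmeas ha01 hahat01 hVint hdec hinc x
  exact ⟨hle, hle.trans (hdrift x)⟩

/-- Inheriting the Lyapunov condition: for Metropolis–Hastings kernels with common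
proposal `Q`, acceptance probabilities `a` (exact) and `â` (modified) with
`â ≥ a` on `V`-decreasing moves and `â ≤ a` on `V`-increasing moves, the modified
kernel satisfies `(K̂V)(x) ≤ (KV)(x) ≤ (1-α)V(x) + β`. -/
theorem stmt_12 {X : Type*} [MeasurableSpace X]
    (Q : X → Measure X) (hQ : ∀ x, IsProbabilityMeasure (Q x))
    (V : X → ℝ) (hVmeas : Measurable V) (hV : ∀ x, 1 ≤ V x)
    (a ahat : X → X → ℝ)
    (hameas : ∀ x, Measurable (a x)) (hahatmeas : ∀ x, Measurable (ahat x))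
    (ha01 : ∀ x y, a x y ∈ Set.Icc (0 : ℝ) 1)
    (hahat01 : ∀ x y, ahat x y ∈ Set.Icc (0 : ℝ) 1)
    (hVint : ∀ x, Integrable V (Q x))
    (hdec : ∀ x y, V y < V x → a x y ≤ ahat x y)
    (hinc : ∀ x y, V x ≤ V y → ahat x y ≤ a x y)
    (α β : ℝ) (hα : 0 < α) (hα1 : α ≤ 1) (hβ : 0 ≤ β)
    (hdrift : ∀ x,
      ∫ y, (a x y * V y + (1 - a x y) * V x) ∂(Q x) ≤ (1 - α) * V x + β) :
    ∀ x,
      (∫ y, (ahat x y * V y + (1 - ahat x y) * V x) ∂(Q x)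
          ≤ ∫ y, (a x y * V y + (1 - a x y) * V x) ∂(Q x)) ∧
      (∫ y, (ahat x y * V y + (1 - ahat x y) * V x) ∂(Q x) ≤ (1 - α) * V x + β) :=
  stmt_12_general Q hQ V a ahat hameas hahatmeas ha01 hahat01 hVint hdec hinc α β hdrift
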